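/- (Absolute clustering.) Let C_1,…,C_k be pairwise disjoint nonempty finite sets of points in ℝ^m with centroids μ_1,…,μ_k and cardinalities n_1,…,n_k; set n = Σ_i n_i, M = max_i n_i and m0 = min_i n_i. Suppose each C_i is contained in the closed ball of radius r_i around μ_i and that for all i ≠ l, ‖μ_i − μ_l‖ ≥ r_i + r_l + g for some g > 0 (a gap g between the enclosing balls). If (a) for every i, g ≥ r_i·√(k·(M + n)/m0), and (b) for every pair p ≠ q, g ≥ k·√(n_p + n_q + n)·√((Σ_i n_i·r_i²)/(n_p·n_q)), then the partition {C_1,…,C_k} is a global minimizer of the k-means objective over all partitions of ∪_i C_i into at most k nonempty clusters. -/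

import Mathlib

/-!
Write `μ` for centroids, `nᵢ = #Cᵢ` and `S = ∑ nᵢ rᵢ²`, so that `Q(Γ) ≤ S`; condition (b) gives
`2 S ≤ n_q (g/k)²` for every `q`. Given a competitor `Γ'`, send each cluster `Cᵢ` to the part `σ i`
of `Γ'` whose centroid is nearest to `μᵢ`. The centroid of a piece `Cᵢ ∩ P` stays in the ball of
`Cᵢ`, so it lies at distance at least `dist μᵢ μ_{σ i} - rᵢ` from `μ_P`. If this exceeds `g/k` for
some `i`, already `Q(Γ') ≥ nᵢ (g/k)² ≥ S`. Otherwise the gaps force `σ` to be injective, hence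
onto the parts of `Γ'`, and every piece of `Cᵢ` outside `σ i` lies at distance `≥ g/k ≥ √2 rᵢ`
from the centroid of its part. Splitting both objectives over the pieces `Cᵢ ∩ P` (parallel axis
theorem), it remains to compare, cluster by cluster, the pieces' squared distances to `μᵢ` with
those to `μ_P`: as the weighted piece centroids average to `μᵢ`, the former add up to at most
`2 rᵢ²` times the mass of `Cᵢ` outside `σ i`.
-/

open Finset

/-- Centroid of a finite set of points of `ℝ^m`. -/
noncomputable def setCentroid {m : ℕ} (C : Finset (EuclideanSpace ℝ (Fin m))) :
    EuclideanSpace ℝ (Fin m) :=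
  ((C.card : ℝ)⁻¹) • ∑ p ∈ C, p

/-- The k-means objective of a partition of a finite set of points of `ℝ^m`. -/
noncomputable def kmeansObjective {m : ℕ} [DecidableEq (EuclideanSpace ℝ (Fin m))]
    {U : Finset (EuclideanSpace ℝ (Fin m))} (P : Finpartition U) : ℝ :=
  ∑ C ∈ P.parts, ∑ p ∈ C, ‖p - setCentroid C‖ ^ 2

open Function

lemma two_mul_sum_mul_sq_le_of_mul_sqrt_mul_sqrt_le {k : ℕ} (hk : 2 ≤ k) {ν r : Fin k → ℝ}
    (hν : ∀ i, 0 < ν i) {g : ℝ}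
    (hb : ∀ p q, p ≠ q → (k : ℝ) * √(ν p + ν q + ∑ i, ν i) *
      √((∑ i, ν i * r i ^ 2) / (ν p * ν q)) ≤ g) (q : Fin k) :
    2 * ∑ i, ν i * r i ^ 2 ≤ ν q * (g / k) ^ 2 := by
  have : Nontrivial (Fin k) := Fin.nontrivial_iff_two_le.2 hk
  obtain ⟨p, hpq⟩ := exists_ne q
  have hk0 : (0 : ℝ) < k := Nat.cast_pos.2 (by omega)
  have hS : 0 ≤ ∑ i, ν i * r i ^ 2 := sum_nonneg fun i _ => mul_nonneg (hν i).le (sq_nonneg _)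
  have hνp : ν p ≤ ∑ i, ν i := single_le_sum (fun i _ => (hν i).le) (mem_univ p)
  have hνpq := mul_pos (hν p) (hν q)
  have hsq : k ^ 2 * ((ν p + ν q + ∑ i, ν i) * ∑ i, ν i * r i ^ 2) ≤ g ^ 2 * (ν p * ν q) := by
    have h := pow_le_pow_left₀
      (mul_nonneg (mul_nonneg hk0.le (Real.sqrt_nonneg _)) (Real.sqrt_nonneg _)) (hb p q hpq) 2
    rw [mul_pow, mul_pow, Real.sq_sqrt (by linarith [hν p, hν q]),
      Real.sq_sqrt (div_nonneg hS hνpq.le), mul_assoc, ← mul_div_assoc, mul_div_assoc', div_le_iff₀ hνpq] at h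
    linarith
  have hmass : 2 * ν p ≤ ν p + ν q + ∑ i, ν i := by linarith [hν q]
  have h := mul_le_mul_of_nonneg_left hmass (mul_nonneg (sq_nonneg (k : ℝ)) hS)
  rw [div_pow, mul_div_assoc', le_div_iff₀ (pow_pos hk0 2)]
  refine le_of_mul_le_mul_left ?_ (hν p)
  linarith

lemma injective_of_forall_dist_lt {ι β X : Type*} [PseudoMetricSpace X] {c : ι → X} {z : β → X}
    {σ : ι → β} {r : ι → ℝ} {g δ : ℝ}
    (hsep : ∀ i j, i ≠ j → r i + r j + g ≤ dist (c i) (c j)) (hδ : 2 * δ ≤ g)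
    (hnear : ∀ i, dist (c i) (z (σ i)) < r i + δ) : Injective σ := by
  intro i j hij
  by_contra hne
  have hi := hnear i
  rw [hij] at hi
  linarith [hsep i j hne, hnear j, dist_triangle_right (c i) (c j) (z (σ j))]

lemma sum_mul_norm_sq_le_of_sum_smul_eq_zero {ι F : Type*} [DecidableEq ι]
    [SeminormedAddCommGroup F] [NormedSpace ℝ F] {s : Finset ι} {i₀ : ι} (hi₀ : i₀ ∈ s) {w : ι → ℝ}
    (hw : ∀ i ∈ s, 0 ≤ w i) {v : ι → F} {r : ℝ} (hv : ∀ i ∈ s, w i ≠ 0 → ‖v i‖ ≤ r)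
    (hsum : ∑ i ∈ s, w i • v i = 0) :
    ∑ i ∈ s, w i * ‖v i‖ ^ 2 ≤ 2 * r ^ 2 * ∑ i ∈ s.erase i₀, w i := by
  have hwv : ∀ i ∈ s, w i * ‖v i‖ ≤ w i * r := fun i hi => by
    rcases eq_or_ne (w i) 0 with h | h
    · simp [h]
    · exact mul_le_mul_of_nonneg_left (hv i hi h) (hw i hi)
  have hrest : ∀ i ∈ s.erase i₀, w i * ‖v i‖ ^ 2 ≤ w i * r ^ 2 := fun i hi => by
    have hi := mem_of_mem_erase hi
    rcases eq_or_ne (w i) 0 with h | h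
    · simp [h]
    · exact mul_le_mul_of_nonneg_left
        (pow_le_pow_left₀ (norm_nonneg _) (hv i hi h) 2) (hw i hi)
  -- Since the weighted vectors sum to zero, the `i₀` term is controlled by all the others.
  have hmass : w i₀ * ‖v i₀‖ ≤ r * ∑ i ∈ s.erase i₀, w i := by
    have hbal : w i₀ • v i₀ = -∑ i ∈ s.erase i₀, w i • v i := by
      rw [← add_sum_erase s _ hi₀] at hsum
      exact eq_neg_of_add_eq_zero_left hsum
    calc w i₀ * ‖v i₀‖ = ‖∑ i ∈ s.erase i₀, w i • v i‖ := by
          rw [← abs_of_nonneg (hw i₀ hi₀), ← Real.norm_eq_abs, ← norm_smul, hbal, norm_neg]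
      _ ≤ ∑ i ∈ s.erase i₀, w i * ‖v i‖ := by
          refine (norm_sum_le _ _).trans (sum_le_sum fun i hi => ?_)
          rw [norm_smul, Real.norm_eq_abs, abs_of_nonneg (hw i (mem_of_mem_erase hi))]
      _ ≤ ∑ i ∈ s.erase i₀, w i * r := sum_le_sum fun i hi => hwv i (mem_of_mem_erase hi)
      _ = r * ∑ i ∈ s.erase i₀, w i := by rw [← sum_mul, mul_comm]
  have hfirst : w i₀ * ‖v i₀‖ ^ 2 ≤ r ^ 2 * ∑ i ∈ s.erase i₀, w i := by
    have hrest0 : 0 ≤ ∑ i ∈ s.erase i₀, w i := sum_nonneg fun i hi => hw i (mem_of_mem_erase hi)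
    rcases eq_or_ne (w i₀) 0 with h | h
    · rw [h, zero_mul]
      exact mul_nonneg (sq_nonneg r) hrest0
    · have hvr := hv i₀ hi₀ h
      calc w i₀ * ‖v i₀‖ ^ 2 = (w i₀ * ‖v i₀‖) * ‖v i₀‖ := by ring
        _ ≤ (r * ∑ i ∈ s.erase i₀, w i) * r :=
          mul_le_mul hmass hvr (norm_nonneg _) (mul_nonneg ((norm_nonneg _).trans hvr) hrest0)
        _ = r ^ 2 * ∑ i ∈ s.erase i₀, w i := by ring
  rw [← add_sum_erase s _ hi₀]
  have := sum_le_sum hrest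
  rw [← sum_mul] at this
  linarith

lemma Finpartition.sum_sum_inter_parts {α M : Type*} [DecidableEq α] [AddCommMonoid M]
    {s A : Finset α} (P : Finpartition s) (hA : A ⊆ s) (f : α → M) :
    ∑ B ∈ P.parts, ∑ x ∈ A ∩ B, f x = ∑ x ∈ A, f x := by
  rw [← sum_biUnion (t := fun B => A ∩ B) (P.disjoint.mono_on fun B _ => inter_subset_right),
    ← inter_biUnion, show P.parts.biUnion (fun B => B) = s from P.biUnion_parts,
    inter_eq_left.2 hA]

lemma Finpartition.parts_eq_singleton_of_card_le_one {α : Type*} [DecidableEq α] {s : Finset α}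
    (P : Finpartition s) (hs : s.Nonempty) (h : #P.parts ≤ 1) : P.parts = {s} := by
  obtain ⟨B, hB⟩ := card_eq_one.1 (h.antisymm (card_pos.2 (P.parts_nonempty hs.ne_empty)))
  have hBs := P.biUnion_parts
  rw [hB, singleton_biUnion] at hBs
  rw [hB, ← hBs, id]

section Centroid

variable {m : ℕ}

local notation "E" => EuclideanSpace ℝ (Fin m)

lemma card_smul_setCentroid (A : Finset E) : (#A : ℝ) • setCentroid A = ∑ p ∈ A, p := by
  rcases A.eq_empty_or_nonempty with rfl | hA
  · simp
  · rw [setCentroid, smul_smul, mul_inv_cancel₀ (by exact_mod_cast hA.card_ne_zero), one_smul]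

lemma sum_sub_setCentroid (A : Finset E) : ∑ p ∈ A, (p - setCentroid A) = 0 := by
  rw [sum_sub_distrib, sum_const, ← card_smul_setCentroid, ← Nat.cast_smul_eq_nsmul ℝ, sub_self]

lemma sum_norm_sub_sq (A : Finset E) (z : E) :
    ∑ p ∈ A, ‖p - z‖ ^ 2 =
      ∑ p ∈ A, ‖p - setCentroid A‖ ^ 2 + #A * dist (setCentroid A) z ^ 2 := by
  have hp : ∀ p, ‖p - z‖ ^ 2 = ‖p - setCentroid A‖ ^ 2
      + 2 * inner ℝ (p - setCentroid A) (setCentroid A - z) + dist (setCentroid A) z ^ 2 := by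
    intro p
    rw [dist_eq_norm, ← norm_add_sq_real, sub_add_sub_cancel]
  simp only [hp, sum_add_distrib, ← mul_sum, ← sum_inner, sum_sub_setCentroid, inner_zero_left,
    mul_zero, add_zero, sum_const, nsmul_eq_mul]

lemma setCentroid_eq_centerMass (A : Finset E) :
    setCentroid A = A.centerMass (fun _ => (1 : ℝ)) id := by
  simp [setCentroid, centerMass]

lemma dist_setCentroid_le {A : Finset E} (hA : A.Nonempty) {z : E} {r : ℝ}
    (h : ∀ p ∈ A, dist p z ≤ r) : dist (setCentroid A) z ≤ r := by
  rw [setCentroid_eq_centerMass, ← Metric.mem_closedBall]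
  exact (convex_closedBall z r).centerMass_mem (fun _ _ => zero_le_one)
    (by simpa using hA.card_pos) h

end Centroid

section Partitions

variable {m : ℕ}

local notation "E" => EuclideanSpace ℝ (Fin m)

variable [DecidableEq (EuclideanSpace ℝ (Fin m))] {s A : Finset (EuclideanSpace ℝ (Fin m))}

lemma sum_card_inter_parts (P : Finpartition s) (hA : A ⊆ s) :
    ∑ B ∈ P.parts, (#(A ∩ B) : ℝ) = #A := by
  simpa using P.sum_sum_inter_parts hA fun _ => (1 : ℝ)

lemma sum_card_inter_smul_sub_setCentroid (P : Finpartition s) (hA : A ⊆ s) :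
    ∑ B ∈ P.parts, (#(A ∩ B) : ℝ) • (setCentroid (A ∩ B) - setCentroid A) = 0 := by
  simp only [smul_sub, sum_sub_distrib, card_smul_setCentroid, ← sum_smul,
    sum_card_inter_parts P hA]
  rw [P.sum_sum_inter_parts hA fun p => p, sub_self]

lemma sum_norm_sub_setCentroid_sq_eq (P : Finpartition s) (hA : A ⊆ s) :
    ∑ p ∈ A, ‖p - setCentroid A‖ ^ 2 = ∑ B ∈ P.parts, (∑ p ∈ A ∩ B, ‖p - setCentroid (A ∩ B)‖ ^ 2
      + #(A ∩ B) * dist (setCentroid (A ∩ B)) (setCentroid A) ^ 2) := by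
  rw [← P.sum_sum_inter_parts hA]
  exact sum_congr rfl fun B _ => sum_norm_sub_sq _ _

lemma kmeansObjective_le_of_forall_parts (P Q : Finpartition s)
    (h : ∀ A ∈ P.parts, ∑ B ∈ Q.parts, #(A ∩ B) * dist (setCentroid (A ∩ B)) (setCentroid A) ^ 2
      ≤ ∑ B ∈ Q.parts, #(A ∩ B) * dist (setCentroid (A ∩ B)) (setCentroid B) ^ 2) :
    kmeansObjective P ≤ kmeansObjective Q := by
  calc kmeansObjective P
      = ∑ A ∈ P.parts, ∑ B ∈ Q.parts, (∑ p ∈ A ∩ B, ‖p - setCentroid (A ∩ B)‖ ^ 2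
          + #(A ∩ B) * dist (setCentroid (A ∩ B)) (setCentroid A) ^ 2) :=
        sum_congr rfl fun A hA => sum_norm_sub_setCentroid_sq_eq Q (P.le hA)
    _ ≤ ∑ A ∈ P.parts, ∑ B ∈ Q.parts, (∑ p ∈ A ∩ B, ‖p - setCentroid (A ∩ B)‖ ^ 2
          + #(A ∩ B) * dist (setCentroid (A ∩ B)) (setCentroid B) ^ 2) := by
        refine sum_le_sum fun A hA => ?_
        rw [sum_add_distrib, sum_add_distrib]
        exact add_le_add_right (h A hA) _
    _ = ∑ B ∈ Q.parts, ∑ A ∈ P.parts, (∑ p ∈ B ∩ A, ‖p - setCentroid (B ∩ A)‖ ^ 2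
          + #(B ∩ A) * dist (setCentroid (B ∩ A)) (setCentroid B) ^ 2) := by
        rw [sum_comm]
        simp only [inter_comm]
    _ = kmeansObjective Q :=
        sum_congr rfl fun B hB => (sum_norm_sub_setCentroid_sq_eq P (Q.le hB)).symm

lemma dist_le_add_dist_setCentroid_inter {A B : Finset E} {r : ℝ}
    (hr : ∀ p ∈ A, dist p (setCentroid A) ≤ r) (hAB : (A ∩ B).Nonempty) :
    dist (setCentroid A) (setCentroid B) ≤ r + dist (setCentroid (A ∩ B)) (setCentroid B) := by
  have := dist_setCentroid_le hAB fun p hp => hr p (mem_inter.1 hp).1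
  linarith [dist_triangle_left (setCentroid A) (setCentroid B) (setCentroid (A ∩ B))]

lemma card_inter_mul_dist_sq_le (A B : Finset E) :
    #(A ∩ B) * dist (setCentroid (A ∩ B)) (setCentroid B) ^ 2 ≤
      ∑ p ∈ B, ‖p - setCentroid B‖ ^ 2 := by
  have hsplit := sum_norm_sub_sq (A ∩ B) (setCentroid B)
  have hwithin : 0 ≤ ∑ p ∈ A ∩ B, ‖p - setCentroid (A ∩ B)‖ ^ 2 := by positivity
  have hsub := sum_le_sum_of_subset_of_nonneg (inter_subset_right (s₁ := A) (s₂ := B))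
    fun p _ _ => sq_nonneg ‖p - setCentroid B‖
  linarith

lemma card_mul_sq_le_kmeansObjective (Q : Finpartition s) (hA : A ⊆ s) {t : ℝ} (ht : 0 ≤ t)
    (h : ∀ B ∈ Q.parts, (A ∩ B).Nonempty → t ≤ dist (setCentroid (A ∩ B)) (setCentroid B)) :
    #A * t ^ 2 ≤ kmeansObjective Q := by
  rw [← sum_card_inter_parts Q hA, sum_mul]
  refine sum_le_sum fun B hB => (?_ : _ ≤ _).trans (card_inter_mul_dist_sq_le A B)
  rcases (A ∩ B).eq_empty_or_nonempty with hAB | hAB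
  · simp [hAB]
  · gcongr
    exact h B hB hAB

lemma sum_card_inter_mul_dist_sq_le_of_forall_ne (Q : Finpartition s) (hA : A ⊆ s) {r : ℝ}
    (hr : ∀ p ∈ A, dist p (setCentroid A) ≤ r) {B₀ : Finset E} (hB₀ : B₀ ∈ Q.parts)
    (hfar : ∀ B ∈ Q.parts, B ≠ B₀ → (A ∩ B).Nonempty →
      2 * r ^ 2 ≤ dist (setCentroid (A ∩ B)) (setCentroid B) ^ 2) :
    ∑ B ∈ Q.parts, #(A ∩ B) * dist (setCentroid (A ∩ B)) (setCentroid A) ^ 2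
      ≤ ∑ B ∈ Q.parts, #(A ∩ B) * dist (setCentroid (A ∩ B)) (setCentroid B) ^ 2 := by
  have hnear : ∑ B ∈ Q.parts, #(A ∩ B) * dist (setCentroid (A ∩ B)) (setCentroid A) ^ 2
      ≤ 2 * r ^ 2 * ∑ B ∈ Q.parts.erase B₀, (#(A ∩ B) : ℝ) := by
    simp only [dist_eq_norm]
    refine sum_mul_norm_sq_le_of_sum_smul_eq_zero hB₀ (fun _ _ => Nat.cast_nonneg _)
      (fun B _ hB => ?_) (sum_card_inter_smul_sub_setCentroid Q hA)
    rw [← dist_eq_norm]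
    exact dist_setCentroid_le (card_ne_zero.1 (Nat.cast_ne_zero.1 hB))
      fun p hp => hr p (mem_inter.1 hp).1
  refine hnear.trans ?_
  rw [mul_sum]
  refine (sum_le_sum fun B hB => ?_).trans
    (sum_le_sum_of_subset_of_nonneg (erase_subset B₀ Q.parts) fun _ _ _ => by positivity)
  rcases (A ∩ B).eq_empty_or_nonempty with hAB | hAB
  · simp [hAB]
  · rw [mul_comm]
    gcongr
    exact hfar B (mem_of_mem_erase hB) (ne_of_mem_erase hB) hAB

lemma kmeansObjective_le_sum_card_mul_sq {k : ℕ} {C : Fin k → Finset E} {r : Fin k → ℝ}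
    (Γ : Finpartition s) (hΓ : Γ.parts = image C univ)
    (hball : ∀ i, ∀ p ∈ C i, dist p (setCentroid (C i)) ≤ r i) :
    kmeansObjective Γ ≤ ∑ i, (#(C i) : ℝ) * r i ^ 2 := by
  rw [kmeansObjective, hΓ]
  refine (sum_image_le_of_nonneg fun _ _ => by positivity).trans (sum_le_sum fun i _ => ?_)
  rw [← nsmul_eq_mul, ← sum_const]
  gcongr with p hp
  rw [← dist_eq_norm]
  exact hball i p hp

end Partitions

lemma kmeansObjective_le_of_forall_dist_lt {m k : ℕ} [DecidableEq (EuclideanSpace ℝ (Fin m))]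
    {C : Fin k → Finset (EuclideanSpace ℝ (Fin m))} {r : Fin k → ℝ} {g δ : ℝ}
    (hball : ∀ i, ∀ p ∈ C i, dist p (setCentroid (C i)) ≤ r i)
    (hsep : ∀ i l, i ≠ l → r i + r l + g ≤ dist (setCentroid (C i)) (setCentroid (C l)))
    (hδ : 0 ≤ δ) (hδg : 2 * δ ≤ g) (hr : ∀ i, 2 * r i ^ 2 ≤ δ ^ 2)
    (Γ Γ' : Finpartition (univ.biUnion C)) (hΓ : Γ.parts = image C univ) (hΓ' : #Γ'.parts ≤ k)
    {σ : Fin k → Finset (EuclideanSpace ℝ (Fin m))} (hσ : ∀ i, σ i ∈ Γ'.parts)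
    (hnear : ∀ i, dist (setCentroid (C i)) (setCentroid (σ i)) < r i + δ) :
    kmeansObjective Γ ≤ kmeansObjective Γ' := by
  have hσinj : Injective σ := injective_of_forall_dist_lt hsep hδg hnear
  have hσsurj := surj_on_of_inj_on_of_card_le (fun i _ => σ i) (fun i _ => hσ i)
    (s := univ) (fun _ _ _ _ h => hσinj h) (by simpa using hΓ')
  refine kmeansObjective_le_of_forall_parts Γ Γ' fun A hA => ?_
  obtain ⟨i, -, rfl⟩ := mem_image.1 (hΓ ▸ hA)
  refine sum_card_inter_mul_dist_sq_le_of_forall_ne Γ' (subset_biUnion_of_mem C (mem_univ i))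
    (hball i) (hσ i) fun B hB hBi hiB => ?_
  obtain ⟨q, -, rfl⟩ := hσsurj B hB
  have hqi : q ≠ i := by
    rintro rfl
    exact hBi rfl
  have hfar : δ ≤ dist (setCentroid (C i ∩ σ q)) (setCentroid (σ q)) := by
    linarith [dist_le_add_dist_setCentroid_inter (hball i) hiB, hsep i q hqi.symm, hnear q,
      dist_triangle_right (setCentroid (C i)) (setCentroid (C q)) (setCentroid (σ q))]
  exact (hr i).trans (pow_le_pow_left₀ hδ hfar 2)

theorem absolute_clustering_global_min_general {m k : ℕ}
    [DecidableEq (EuclideanSpace ℝ (Fin m))] (hk : 0 < k)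
    (C : Fin k → Finset (EuclideanSpace ℝ (Fin m)))
    (hne : ∀ i, (C i).Nonempty)
    (r : Fin k → ℝ) (g : ℝ) (hg : 0 < g)
    (hball : ∀ i, ∀ p ∈ C i, dist p (setCentroid (C i)) ≤ r i)
    (hsep : ∀ i l, i ≠ l → r i + r l + g ≤ dist (setCentroid (C i)) (setCentroid (C l)))
    (n : ℝ)
    (hn : n = ∑ i, ((C i).card : ℝ))
    (hb : ∀ p q, p ≠ q →
      (k : ℝ) * Real.sqrt (((C p).card : ℝ) + ((C q).card : ℝ) + n) *
        Real.sqrt ((∑ i, ((C i).card : ℝ) * r i ^ 2) /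
          (((C p).card : ℝ) * ((C q).card : ℝ))) ≤ g)
    (Γ : Finpartition (Finset.univ.biUnion C))
    (hΓ : Γ.parts = Finset.image C Finset.univ) :
    ∀ Γ' : Finpartition (Finset.univ.biUnion C), Γ'.parts.card ≤ k →
      kmeansObjective Γ ≤ kmeansObjective Γ' := by
  intro Γ' hΓ'
  subst hn
  have hsub : ∀ i, C i ⊆ univ.biUnion C := fun i => subset_biUnion_of_mem C (mem_univ i)
  have hU : (univ.biUnion C).Nonempty := (hne ⟨0, hk⟩).mono (hsub _)
  obtain rfl | hk2 : k = 1 ∨ 2 ≤ k := by omega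
  · have hΓ1 : #Γ.parts ≤ 1 := hΓ ▸ card_image_le.trans (by simp)
    rw [kmeansObjective, kmeansObjective, Γ.parts_eq_singleton_of_card_le_one hU hΓ1,
      Γ'.parts_eq_singleton_of_card_le_one hU hΓ']
  have hgk : 0 ≤ g / k := div_nonneg hg.le k.cast_nonneg
  have hcard : ∀ i, (0 : ℝ) < #(C i) := fun i => by exact_mod_cast (hne i).card_pos
  have hS : 0 ≤ ∑ i, (#(C i) : ℝ) * r i ^ 2 := sum_nonneg fun i _ => by positivity
  have hspread := two_mul_sum_mul_sq_le_of_mul_sqrt_mul_sqrt_le hk2 hcard hb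
  choose σ hσ hσmin using fun i => Γ'.parts.exists_min_image
    (fun B => dist (setCentroid (C i)) (setCentroid B)) (Γ'.parts_nonempty hU.ne_empty)
  by_cases hfar : ∃ q, r q + g / k ≤ dist (setCentroid (C q)) (setCentroid (σ q))
  · obtain ⟨q, hq⟩ := hfar
    calc kmeansObjective Γ ≤ ∑ i, (#(C i) : ℝ) * r i ^ 2 :=
          kmeansObjective_le_sum_card_mul_sq Γ hΓ hball
      _ ≤ #(C q) * (g / k) ^ 2 := by linarith [hspread q, hS]
      _ ≤ kmeansObjective Γ' := card_mul_sq_le_kmeansObjective Γ' (hsub q) hgk fun B hB hqB => by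
          linarith [hσmin q B hB, dist_le_add_dist_setCentroid_inter (hball q) hqB]
  · simp only [not_exists, not_le] at hfar
    refine kmeansObjective_le_of_forall_dist_lt hball hsep hgk ?_ (fun i => ?_) Γ Γ' hΓ hΓ' hσ hfar
    · rw [mul_div_assoc', div_le_iff₀ (by positivity)]
      nlinarith [(Nat.ofNat_le_cast.2 hk2 : (2 : ℝ) ≤ k)]
    · refine le_of_mul_le_mul_left ?_ (hcard i)
      linarith [hspread i, single_le_sum (f := fun j => (#(C j) : ℝ) * r j ^ 2)
        (fun j _ => mul_nonneg (hcard j).le (sq_nonneg (r j))) (mem_univ i)]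

/-- Absolute clustering: if pairwise disjoint nonempty clusters `C_1,…,C_k`, each
enclosed in a ball of radius `r_i` around its centroid, are separated by gaps of
size at least `g` satisfying conditions (a) and (b), then `{C_1,…,C_k}` is a global
minimizer of the k-means objective over all partitions of their union into at most
`k` nonempty clusters. -/
theorem absolute_clustering_global_min {m k : ℕ}
    [DecidableEq (EuclideanSpace ℝ (Fin m))] (hk : 0 < k)
    (C : Fin k → Finset (EuclideanSpace ℝ (Fin m)))
    (hne : ∀ i, (C i).Nonempty)
    (hdisj : ∀ i j, i ≠ j → Disjoint (C i) (C j))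
    (r : Fin k → ℝ) (g : ℝ) (hg : 0 < g)
    (hball : ∀ i, ∀ p ∈ C i, dist p (setCentroid (C i)) ≤ r i)
    (hsep : ∀ i l, i ≠ l → r i + r l + g ≤ dist (setCentroid (C i)) (setCentroid (C l)))
    (n M m0 : ℝ)
    (hn : n = ∑ i, ((C i).card : ℝ))
    (hM : IsGreatest (Set.range fun i => ((C i).card : ℝ)) M)
    (hm0 : IsLeast (Set.range fun i => ((C i).card : ℝ)) m0)
    (ha : ∀ i, r i * Real.sqrt ((k : ℝ) * (M + n) / m0) ≤ g)
    (hb : ∀ p q, p ≠ q →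
      (k : ℝ) * Real.sqrt (((C p).card : ℝ) + ((C q).card : ℝ) + n) *
        Real.sqrt ((∑ i, ((C i).card : ℝ) * r i ^ 2) /
          (((C p).card : ℝ) * ((C q).card : ℝ))) ≤ g)
    (Γ : Finpartition (Finset.univ.biUnion C))
    (hΓ : Γ.parts = Finset.image C Finset.univ) :
    ∀ Γ' : Finpartition (Finset.univ.biUnion C), Γ'.parts.card ≤ k →
      kmeansObjective Γ ≤ kmeansObjective Γ' :=
  absolute_clustering_global_min_general hk C hne r g hg hball hsep n hn hb Γ hΓ
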